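/- Let T = R_{2r+1}(P^1, …, P^{2r+1}) be the composition of tournaments P^1, …, P^{2r+1} over the highly regular tournament R_{2r+1}, with r ≥ 1. If χ(P^i) = k for every 1 ≤ i ≤ 2r+1, then χ(T) ≤ ⌈k(2r+1)/(r+1)⌉. -/

import Mathlib

/-- A tournament: an irreflexive relation such that for every pair of distinct
vertices exactly one of the two directions holds. -/
def IsTournament {V : Type*} (rel : V → V → Prop) : Prop :=
  (∀ v, ¬ rel v v) ∧ ∀ u v : V, u ≠ v → (rel u v ↔ ¬ rel v u)

/-- A set `S` is acyclic (transitive) in a tournament `rel`: the relation restricted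
to `S` is transitive; for a tournament this is equivalent to the restriction being a
strict linear order, i.e. to the induced subtournament having no directed cycle. -/
def AcyclicIn {V : Type*} (rel : V → V → Prop) (S : Set V) : Prop :=
  ∀ a ∈ S, ∀ b ∈ S, ∀ c ∈ S, rel a b → rel b c → rel a c

/-- The (acyclic) chromatic number: the least `k` such that there is a coloring of the
vertices with `k` colors all of whose color classes are acyclic sets. -/
noncomputable def chromaticNumber {V : Type*} (rel : V → V → Prop) : ℕ :=
  sInf {k : ℕ | ∃ c : V → Fin k, ∀ i : Fin k, AcyclicIn rel {v | c v = i}}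

/-- The dimension of the acyclic complex of a tournament: the maximum size of an
acyclic set, minus one. -/
noncomputable def acyDim {V : Type*} (rel : V → V → Prop) : ℕ :=
  sSup {n : ℕ | ∃ S : Finset V, AcyclicIn rel ↑S ∧ S.card = n} - 1

/-- The edge relation of the highly regular tournament `R_{2r+1}` on `ZMod (2r+1)`:
`i → j` iff `j ≡ i + l (mod 2r+1)` for some `1 ≤ l ≤ r`. -/
def hrRel (r : ℕ) (i j : ZMod (2 * r + 1)) : Prop :=
  ∃ l : ℕ, 1 ≤ l ∧ l ≤ r ∧ j = i + (l : ZMod (2 * r + 1))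

/-- The edge relation of the composition `R_{2q+1}(P^1, …, P^{2q+1})` of the tournaments
`relP i` over the highly regular tournament `R_{2q+1}`: inside a block use the block's
relation, between different blocks use the highly regular relation on the indices. -/
def compTournRel (q : ℕ) {V : ZMod (2 * q + 1) → Type*} (relP : ∀ i, V i → V i → Prop)
    (u v : Σ i, V i) : Prop :=
  (∃ h : u.1 = v.1, relP v.1 (h ▸ u.2) v.2) ∨ (u.1 ≠ v.1 ∧ hrRel q u.1 v.1)

/-!
Colour every block `P^i` optimally with colours `0, …, k-1` and give a vertex of block `i`
with colour `j` the slot `(2r+1) j + i`. Cutting the slots `0, …, (2r+1)k - 1` into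
`⌈k(2r+1)/(r+1)⌉` windows of `r+1` consecutive slots colours `T`: inside a window, two
different slots `a < b` belong to blocks `a, b (mod 2r+1)` with `0 < b - a ≤ r`, so every
vertex of slot `a` beats every vertex of slot `b`, while a single slot is an acyclic colour
class of one block. Hence each window is acyclic.
-/

theorem exists_acyclic_coloring {V : Type*} [Finite V] (rel : V → V → Prop) :
    ∃ c : V → Fin (chromaticNumber rel), ∀ i, AcyclicIn rel {v | c v = i} := by
  refine Nat.sInf_mem (s := {k | ∃ c : V → Fin k, ∀ i, AcyclicIn rel {v | c v = i}}) ?_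
  obtain ⟨n, ⟨e⟩⟩ := Finite.exists_equiv_fin V
  refine ⟨n, e, fun i a ha b hb c hc hab _ => ?_⟩
  obtain rfl : a = b := e.injective (ha.trans hb.symm)
  obtain rfl : a = c := e.injective (ha.trans hc.symm)
  exact hab

theorem Nat.le_add_of_div_eq {a b q : ℕ} (h : a / (q + 1) = b / (q + 1)) : b ≤ a + q := by
  have hb := Nat.lt_div_mul_add (a := b) (by omega : 0 < q + 1)
  have ha := Nat.div_mul_le_self a (q + 1)
  rw [← h] at hb
  omega

theorem ZMod.natCast_ne_zero_of_pos_of_lt {a n : ℕ} (h0 : 0 < a) (ha : a < n) :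
    (a : ZMod n) ≠ 0 := by
  rw [Ne, ZMod.natCast_eq_zero_iff]
  exact fun hdvd => absurd (Nat.le_of_dvd h0 hdvd) (by omega)

section HighlyRegular

variable {q : ℕ}

theorem hrRel_natCast {a b : ℕ} (hab : a < b) (hba : b ≤ a + q) :
    hrRel q (a : ZMod (2 * q + 1)) b :=
  ⟨b - a, by omega, by omega, by rw [← Nat.cast_add, Nat.add_sub_cancel' hab.le]⟩

theorem hrRel_irrefl (i : ZMod (2 * q + 1)) : ¬ hrRel q i i := by
  rintro ⟨l, hl1, hlq, hl⟩
  exact ZMod.natCast_ne_zero_of_pos_of_lt hl1 (by omega) (left_eq_add.mp hl)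

theorem hrRel_asymm {i j : ZMod (2 * q + 1)} (hij : hrRel q i j) : ¬ hrRel q j i := by
  obtain ⟨l, hl1, hlq, rfl⟩ := hij
  rintro ⟨m, hm1, hmq, hm⟩
  refine ZMod.natCast_ne_zero_of_pos_of_lt (a := l + m) (n := 2 * q + 1) (by omega) (by omega) ?_
  rw [Nat.cast_add]
  exact left_eq_add.mp (hm.trans (add_assoc _ _ _))

end HighlyRegular

section Composition

variable {q : ℕ} {V : ZMod (2 * q + 1) → Type*} (relP : ∀ i, V i → V i → Prop)

theorem compTournRel_mk_mk {i : ZMod (2 * q + 1)} {x y : V i} :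
    compTournRel q relP ⟨i, x⟩ ⟨i, y⟩ ↔ relP i x y := by
  simp [compTournRel]

theorem acyclicIn_compTournRel_of_window (S : Set (Σ i, V i)) (ρ : (Σ i, V i) → ℕ)
    (hρ : ∀ v, (ρ v : ZMod (2 * q + 1)) = v.1) (hwin : ∀ u ∈ S, ∀ v ∈ S, ρ v ≤ ρ u + q)
    (hlevel : ∀ n, AcyclicIn (compTournRel q relP) {v | ρ v = n}) :
    AcyclicIn (compTournRel q relP) S := by
  have forward : ∀ u ∈ S, ∀ v ∈ S, ρ u < ρ v →
      compTournRel q relP u v ∧ ¬ compTournRel q relP v u := by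
    intro u hu v hv hlt
    have huv : hrRel q u.1 v.1 := hρ u ▸ hρ v ▸ hrRel_natCast hlt (hwin u hu v hv)
    have hne : u.1 ≠ v.1 := fun h => hrRel_irrefl v.1 (h ▸ huv)
    refine ⟨Or.inr ⟨hne, huv⟩, ?_⟩
    rintro (⟨h, -⟩ | ⟨-, hvu⟩)
    exacts [hne h.symm, hrRel_asymm huv hvu]
  have mono : ∀ u ∈ S, ∀ v ∈ S, compTournRel q relP u v → ρ u ≤ ρ v :=
    fun u hu v hv h => not_lt.1 fun hlt => (forward v hv u hu hlt).2 h
  intro a ha b hb c hc hab hbc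
  have hρab := mono a ha b hb hab
  have hρbc := mono b hb c hc hbc
  rcases (hρab.trans hρbc).lt_or_eq with hlt | heq
  · exact (forward a ha c hc hlt).1
  · exact hlevel (ρ a) a rfl b (show ρ b = ρ a by omega) c heq.symm hab hbc

variable {relP} {k : ℕ}

def colorSlot (cP : ∀ i, V i → Fin k) (v : Σ i, V i) : ℕ :=
  (2 * q + 1) * cP v.1 v.2 + v.1.val

theorem natCast_colorSlot (cP : ∀ i, V i → Fin k) (v : Σ i, V i) :
    (colorSlot cP v : ZMod (2 * q + 1)) = v.1 := by
  simp [colorSlot]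

theorem colorSlot_lt (cP : ∀ i, V i → Fin k) (v : Σ i, V i) : colorSlot cP v < (2 * q + 1) * k :=
  calc colorSlot cP v < (2 * q + 1) * (cP v.1 v.2 + 1) := by
        rw [Nat.mul_succ]; exact Nat.add_lt_add_left (ZMod.val_lt _) _
    _ ≤ (2 * q + 1) * k := Nat.mul_le_mul_left _ (cP v.1 v.2).isLt

theorem acyclicIn_colorSlot_eq {cP : ∀ i, V i → Fin k}
    (hcP : ∀ i j, AcyclicIn (relP i) {x | cP i x = j}) (n : ℕ) :
    AcyclicIn (compTournRel q relP) {v | colorSlot cP v = n} := by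
  have hblock : ∀ {u v : Σ i, V i}, colorSlot cP u = colorSlot cP v → u.1 = v.1 :=
    fun {u v} h => by rw [← natCast_colorSlot cP u, h, natCast_colorSlot]
  rintro ⟨i, x⟩ rfl ⟨i', y⟩ hy ⟨i'', z⟩ hz
  obtain rfl : i = i' := hblock hy.symm
  obtain rfl : i = i'' := hblock hz.symm
  have hcolor : ∀ {y}, colorSlot cP ⟨i, y⟩ = colorSlot cP ⟨i, x⟩ → cP i y = cP i x :=
    fun h => Fin.ext (Nat.eq_of_mul_eq_mul_left (by omega) (Nat.add_right_cancel h))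
  simp only [compTournRel_mk_mk]
  exact hcP i (cP i x) x rfl y (hcolor hy) z (hcolor hz)

theorem chromaticNumber_compTournRel_le {t : ℕ}
    (hcol : ∀ i, ∃ c : V i → Fin k, ∀ j, AcyclicIn (relP i) {x | c x = j})
    (ht : k * (2 * q + 1) ≤ (q + 1) * t) : chromaticNumber (compTournRel q relP) ≤ t := by
  choose cP hcP using hcol
  have hwindow : ∀ v, colorSlot cP v / (q + 1) < t := fun v => by
    rw [Nat.div_lt_iff_lt_mul q.succ_pos]
    linarith [colorSlot_lt cP v]
  refine Nat.sInf_le ⟨fun v => ⟨colorSlot cP v / (q + 1), hwindow v⟩, fun g => ?_⟩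
  refine acyclicIn_compTournRel_of_window relP _ _ (natCast_colorSlot cP) ?_
    (acyclicIn_colorSlot_eq hcP)
  intro u hu v hv
  exact Nat.le_add_of_div_eq (congrArg Fin.val (hu.trans hv.symm))

end Composition

theorem stmt9_general (r k : ℕ) (V : ZMod (2 * r + 1) → Type)
    [∀ i, Fintype (V i)]
    (relP : ∀ i, V i → V i → Prop)
    (hchi : ∀ i, chromaticNumber (relP i) = k) :
    (chromaticNumber (compTournRel r relP) : ℤ) ≤
      ⌈((k : ℚ) * (2 * r + 1)) / (r + 1)⌉ := by
  set x : ℚ := (k : ℚ) * (2 * r + 1) / (r + 1)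
  have hcover : k * (2 * r + 1) ≤ (r + 1) * ⌈x⌉₊ := by
    have hx : x ≤ ⌈x⌉₊ := Nat.le_ceil x
    rw [div_le_iff₀ (by positivity)] at hx
    exact_mod_cast (by linarith : (k : ℚ) * (2 * r + 1) ≤ (r + 1) * ⌈x⌉₊)
  have hcol : ∀ i, ∃ c : V i → Fin k, ∀ j, AcyclicIn (relP i) {v | c v = j} :=
    fun i => hchi i ▸ exists_acyclic_coloring (relP i)
  calc (chromaticNumber (compTournRel r relP) : ℤ) ≤ ⌈x⌉₊ := by
        exact_mod_cast chromaticNumber_compTournRel_le hcol hcover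
    _ = ⌈x⌉ := Int.natCast_ceil_eq_ceil (by positivity)

/-- Let `T = R_{2r+1}(P^1, …, P^{2r+1})` with `r ≥ 1`. If `χ(P^i) = k` for every `i`,
then `χ(T) ≤ ⌈k(2r+1)/(r+1)⌉`. -/
theorem stmt9 (r k : ℕ) (hr : 1 ≤ r) (V : ZMod (2 * r + 1) → Type)
    [∀ i, Fintype (V i)] [∀ i, Nonempty (V i)]
    (relP : ∀ i, V i → V i → Prop) (htour : ∀ i, IsTournament (relP i))
    (hchi : ∀ i, chromaticNumber (relP i) = k) :
    (chromaticNumber (compTournRel r relP) : ℤ) ≤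
      ⌈((k : ℚ) * (2 * r + 1)) / (r + 1)⌉ :=
  stmt9_general r k V relP hchi
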